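/- Let k be an algebraically closed field of characteristic p and V, W finite-dimensional k-vector spaces. If C: V → W is a surjective k-linear map and φ: V → W is a p-semilinear map (additive, φ(av) = a^p φ(v)), then the map C - φ: V → W is surjective. -/

import Mathlib

open Polynomial Finset Classical

set_option maxHeartbeats 800000

section Aux

variable {p : ℕ} {k : Type*} [Field k] [IsAlgClosed k] [CharP k p]
variable {W : Type*} [AddCommGroup W] [Module k W] [FiniteDimensional k W]

private lemma aux_exists_rel_12 (ψ : W →+ W) (w : W) (hw : w ≠ 0) :
    ∃ n, ∃ c : ℕ → k, ψ^[n+1] w = ∑ i ∈ Finset.range (n+1), c i • ψ^[i] w := by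
  set b : ℕ → W := fun i => ψ^[i] w with hb
  set N := Module.finrank k W + 1 with hN
  have hnli : ¬ LinearIndependent k (fun i : Fin N => b i) := by
    intro h
    have := h.fintype_card_le_finrank
    simp [hN] at this
  obtain ⟨g, hg, i0, hi0⟩ := Fintype.not_linearIndependent_iff.mp hnli
  set g' : ℕ → k := fun i => if h : i < N then g ⟨i, h⟩ else 0 with hg'
  have hsum : ∑ i ∈ range N, g' i • b i = 0 := by
    rw [← Fin.sum_univ_eq_sum_range (fun i => g' i • b i) N, ← hg]
    refine Finset.sum_congr rfl fun i _ => ?_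
    simp [hg', i.isLt]
  set S : Finset ℕ := (range N).filter (fun i => g' i ≠ 0) with hS
  have hSne : S.Nonempty := by
    refine ⟨i0, ?_⟩
    simp only [hS, mem_filter, mem_range]
    exact ⟨i0.isLt, by simp [hg', i0.isLt, hi0]⟩
  set M := S.max' hSne with hM
  have hMmem := S.max'_mem hSne
  have hMlt : M < N := mem_range.mp (mem_filter.mp hMmem).1
  have hMne : g' M ≠ 0 := (mem_filter.mp hMmem).2
  have hgt : ∀ i, M < i → g' i = 0 := by
    intro i hi
    by_contra h
    have hiN : i < N := by
      by_contra h'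
      exact h (by simp [hg', h'])
    have : i ∈ S := by simp [hS, mem_filter, mem_range, hiN, h]
    exact absurd (S.le_max' i this) (not_le.mpr hi)
  have hsum2 : ∑ i ∈ range (M + 1), g' i • b i = 0 := by
    rw [← hsum]
    refine Finset.sum_subset (Finset.range_subset_range.mpr (by omega)) ?_
    intro x hx hnx
    rw [mem_range, not_lt] at hnx
    rw [hgt x (by omega), zero_smul]
  match M, hMne, hgt, hsum2 with
  | 0, hMne, hgt, hsum2 =>
    exfalso
    rw [Finset.sum_range_one] at hsum2
    have : b 0 = 0 := by
      have := smul_eq_zero.mp hsum2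
      tauto
    simp [hb] at this
    exact hw this
  | (n+1), hMne, hgt, hsum2 =>
    refine ⟨n, fun i => -(g' i) / g' (n+1), ?_⟩
    rw [Finset.sum_range_succ] at hsum2
    have h1 : g' (n+1) • b (n+1) = -∑ i ∈ range (n+1), g' i • b i :=
      eq_neg_of_add_eq_zero_right hsum2
    calc b (n+1) = (g' (n+1))⁻¹ • (g' (n+1) • b (n+1)) := by
          rw [inv_smul_smul₀ hMne]
      _ = (g' (n+1))⁻¹ • -∑ i ∈ range (n+1), g' i • b i := by rw [h1]
      _ = ∑ i ∈ range (n+1), (-(g' i) / g' (n+1)) • b i := by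
          rw [← Finset.sum_neg_distrib, Finset.smul_sum]
          refine Finset.sum_congr rfl fun i _ => ?_
          rw [← neg_smul, smul_smul, div_eq_inv_mul]


private lemma aux_key_12 (hp : p.Prime) (ψ : W →+ W)
    (hψ : ∀ (a : k) (v : W), ψ (a • v) = a ^ p • ψ v) (w : W) :
    ∃ x : W, x - ψ x = w := by
  by_cases hw : w = 0
  · exact ⟨0, by simp [hw]⟩
  obtain ⟨n, c, hrel⟩ := aux_exists_rel_12 (k := k) ψ w hw
  haveI : ExpChar k p := ExpChar.prime hp
  set A : ℕ → k[X] := fun i =>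
    Nat.rec (1 + Polynomial.C (c 0) * X)
      (fun i Ai => Ai ^ p + Polynomial.C (c (i+1)) * X) i with hA
  set P : k[X] := A n ^ p - X with hP
  have hcoeff : P.coeff 1 = -1 := by
    have h1 : (A n ^ p).coeff 1 = 0 := by
      rw [← Polynomial.map_frobenius_expand (p := p) (A n), Polynomial.coeff_map,
        Polynomial.coeff_expand hp.pos]
      rw [if_neg (by simpa using hp.one_lt.ne')]
      simp
    simp [hP, h1]
  have hPdeg : P.degree ≠ 0 := by
    intro h
    have hP0 : P ≠ 0 := fun h0 => by simp [h0] at hcoeff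
    have : P.natDegree = 0 := natDegree_eq_zero_iff_degree_le_zero.mpr h.le
    have h1 : P.coeff 1 = 0 :=
      Polynomial.coeff_eq_zero_of_natDegree_lt (by omega)
    rw [h1] at hcoeff
    exact one_ne_zero (α := k) (neg_eq_zero.mp hcoeff.symm)
  obtain ⟨s, hs⟩ := IsAlgClosed.exists_root P hPdeg
  set a : ℕ → k := fun i => (A i).eval s with ha
  have ha0 : a 0 = 1 + c 0 * s := by simp [ha, hA]
  have haS : ∀ i, a (i+1) = a i ^ p + c (i+1) * s := by
    intro i; simp [ha, hA]
  have has : a n ^ p = s := by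
    have := hs
    rw [Polynomial.IsRoot, hP] at this
    simpa [sub_eq_zero, ha] using this
  set b : ℕ → W := fun i => ψ^[i] w with hb
  have hψb : ∀ i, ψ (b i) = b (i+1) := fun i =>
    (Function.iterate_succ_apply' ψ i w).symm
  refine ⟨∑ i ∈ Finset.range (n+1), a i • b i, ?_⟩
  have hψx : ψ (∑ i ∈ range (n+1), a i • b i) = ∑ i ∈ range (n+1), (a i ^ p) • b (i+1) := by
    rw [map_sum]
    exact Finset.sum_congr rfl fun i _ => by rw [hψ, hψb]
  have hbn : b (n+1) = ∑ i ∈ range (n+1), c i • b i := hrel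
  have hw0 : b 0 = w := rfl
  rw [hψx, Finset.sum_range_succ (fun i => (a i ^ p) • b (i+1)) n, has, hbn,
    Finset.smul_sum, Finset.sum_range_succ' (fun i => a i • b i) n,
    Finset.sum_range_succ' (fun i => s • (c i • b i)) n]
  have e0 : a 0 • b 0 = b 0 + s • (c 0 • b 0) := by
    rw [ha0, add_smul, one_smul, smul_smul, mul_comm]
  have e1 : ∑ i ∈ range n, a (i+1) • b (i+1)
      = ∑ i ∈ range n, ((a i ^ p) • b (i+1) + s • (c (i+1) • b (i+1))) := by
    refine Finset.sum_congr rfl fun i _ => ?_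
    rw [haS, add_smul, smul_smul, mul_comm]
  rw [e0, e1, Finset.sum_add_distrib, ← hw0]
  abel

end Aux

/-- Over an algebraically closed field `k` of characteristic `p`, if `C : V → W` is a
surjective `k`-linear map of finite-dimensional vector spaces and `φ : V → W` is
additive and `p`-semilinear (`φ(a•v) = a^p • φ(v)`), then `C - φ` is surjective. -/
theorem stmt_12 (p : ℕ) (hp : p.Prime) (k : Type*) [Field k] [IsAlgClosed k] [CharP k p]
    (V W : Type*) [AddCommGroup V] [Module k V] [AddCommGroup W] [Module k W]
    [FiniteDimensional k V] [FiniteDimensional k W]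
    (C : V →ₗ[k] W) (hC : Function.Surjective C)
    (φ : V →+ W) (hφ : ∀ (a : k) (v : V), φ (a • v) = a ^ p • φ v) :
    ∀ w : W, ∃ v : V, C v - φ v = w := by
  obtain ⟨sec, hsec⟩ := C.exists_rightInverse_of_surjective (LinearMap.range_eq_top.mpr hC)
  set ψ : W →+ W := φ.comp sec.toAddMonoidHom with hψdef
  have hψ : ∀ (a : k) (v : W), ψ (a • v) = a ^ p • ψ v := by
    intro a v
    simp only [hψdef, AddMonoidHom.comp_apply, LinearMap.toAddMonoidHom_coe, map_smul]
    exact hφ a (sec v)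
  intro w
  obtain ⟨u, hu⟩ := aux_key_12 hp ψ hψ w
  refine ⟨sec u, ?_⟩
  have hCu : C (sec u) = u := DFunLike.congr_fun hsec u
  rw [hCu]
  exact hu
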